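/- arXiv:2101.02955 — 2 statements merged into one kernel-verified Lean document; each statement's English description precedes it below -/
import Mathlib

section
/- Let n ≥ 1 and let g₁, g₂ : ℝⁿ → (real symmetric positive definite n×n matrices) be of class C¹. Let φ₁, φ₂ : ℝⁿ → ℝ be of class C² satisfying the eikonal equations |∇φ₁|²_{g₁}(x) = 1 and |∇φ₂|²_{g₂}(x) = 1 for all x. Write s^{jk}(x) = g₂^{jk}(x) − g₁^{jk}(x) for the entries of g₂(x)⁻¹ − g₁(x)⁻¹. Let h > 0 and define m(x) = −(i/2) e^{i(φ₁(x)−φ₂(x))/h} Σ_{j,k=1}^n s^{jk}(x) ∂_{x_j}φ₁(x) ∂_{x_k}φ₁(x). Let a₂ : ℝ × ℝⁿ → ℂ be of class C² satisfying L_{g₁,φ₁} a₂ = 0 everywhere, and let a₃ : ℝ × ℝⁿ → ℂ be of class C² satisfying L_{g₂,φ₂} a₃(t,x) = a₂(t,x) m(x) everywhere. Then for every (t,x): (∂_t² − Δ_{g₂})( h a₂(t,x) e^{i(φ₁(x)−t)/h} + a₃(t,x) e^{i(φ₂(x)−t)/h} ) = e^{i(φ₁(x)−t)/h} [ h (∂_t²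 − Δ_{g₂})a₂(t,x) − 2i Σ_{j,k=1}^n s^{jk}(x) ∂_{x_j}φ₁(x) ∂_{x_k}a₂(t,x) − i (Δ_{g₂}φ₁(x) − Δ_{g₁}φ₁(x)) a₂(t,x) ] + e^{i(φ₂(x)−t)/h} (∂_t² − Δ_{g₂})a₃(t,x). -/
noncomputable section

open Complex

/-- Partial derivative of a real-valued function on `ℝⁿ` in the `j`-th coordinate. -/
def pdR (n : ℕ) (j : Fin n) (f : (Fin n → ℝ) → ℝ) (x : Fin n → ℝ) : ℝ :=
  fderiv ℝ f x (Pi.single j 1)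

/-- Partial derivative of a complex-valued function on `ℝⁿ` in the `j`-th coordinate. -/
def pdC (n : ℕ) (j : Fin n) (f : (Fin n → ℝ) → ℂ) (x : Fin n → ℝ) : ℂ :=
  fderiv ℝ f x (Pi.single j 1)

/-- Laplace–Beltrami operator in coordinates, acting on complex-valued functions. -/
def laplC (n : ℕ) (g : (Fin n → ℝ) → Matrix (Fin n) (Fin n) ℝ)
    (u : (Fin n → ℝ) → ℂ) (x : Fin n → ℝ) : ℂ :=
  ((Real.sqrt (g x).det : ℝ) : ℂ)⁻¹ *
    ∑ j, pdC n j (fun y => ((Real.sqrt (g y).det : ℝ) : ℂ) *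
      ∑ k, (((g y)⁻¹ j k : ℝ) : ℂ) * pdC n k u y) x

/-- Laplace–Beltrami operator in coordinates, acting on real-valued functions. -/
def laplR (n : ℕ) (g : (Fin n → ℝ) → Matrix (Fin n) (Fin n) ℝ)
    (u : (Fin n → ℝ) → ℝ) (x : Fin n → ℝ) : ℝ :=
  (Real.sqrt (g x).det)⁻¹ *
    ∑ j, pdR n j (fun y => Real.sqrt (g y).det *
      ∑ k, (g y)⁻¹ j k * pdR n k u y) x

/-- Time derivative of a function of `(t, x)`. -/
def dt1 (n : ℕ) (a : ℝ × (Fin n → ℝ) → ℂ) (t : ℝ) (x : Fin n → ℝ) : ℂ :=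
  deriv (fun s => a (s, x)) t

/-- Second time derivative of a function of `(t, x)`. -/
def dt2 (n : ℕ) (a : ℝ × (Fin n → ℝ) → ℂ) (t : ℝ) (x : Fin n → ℝ) : ℂ :=
  deriv (fun s => dt1 n a s x) t

/-- The wave operator `∂_t² − Δ_g`. -/
def waveOp (n : ℕ) (g : (Fin n → ℝ) → Matrix (Fin n) (Fin n) ℝ)
    (a : ℝ × (Fin n → ℝ) → ℂ) (t : ℝ) (x : Fin n → ℝ) : ℂ :=
  dt2 n a t x - laplC n g (fun y => a (t, y)) x

/-- `⟨∇φ, ∇a(t,·)⟩_g`. -/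
def gradInnerC (n : ℕ) (g : (Fin n → ℝ) → Matrix (Fin n) (Fin n) ℝ)
    (φ : (Fin n → ℝ) → ℝ) (a : ℝ × (Fin n → ℝ) → ℂ) (t : ℝ) (x : Fin n → ℝ) : ℂ :=
  ∑ j, ∑ k, (((g x)⁻¹ j k * pdR n j φ x : ℝ) : ℂ) * pdC n k (fun y => a (t, y)) x

/-- `|∇φ|²_g`. -/
def gradNormSq (n : ℕ) (g : (Fin n → ℝ) → Matrix (Fin n) (Fin n) ℝ)
    (φ : (Fin n → ℝ) → ℝ) (x : Fin n → ℝ) : ℝ :=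
  ∑ j, ∑ k, (g x)⁻¹ j k * pdR n j φ x * pdR n k φ x

/-- The transport operator `L_{g,φ} a = ∂_t a + ⟨∇φ, ∇a⟩_g + (1/2)(Δ_g φ)·a`. -/
def transport (n : ℕ) (g : (Fin n → ℝ) → Matrix (Fin n) (Fin n) ℝ)
    (φ : (Fin n → ℝ) → ℝ) (a : ℝ × (Fin n → ℝ) → ℂ) (t : ℝ) (x : Fin n → ℝ) : ℂ :=
  dt1 n a t x + gradInnerC n g φ a t x + (1 / 2 : ℂ) * (laplR n g φ x : ℂ) * a (t, x)


/-!
Conjugating the wave operator by a phase: for `e = exp (κ (φ x - t))`,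
`□_g (a e) = e (□_g a - 2κ L_{g,φ} a + κ² (1 - |∇φ|²_g) a)`. This is the Leibniz rule applied to
the divergence form of `Δ_g`; the symmetry of `g⁻¹` makes the two cross terms
`⟨∇φ, ∇a⟩_g` coincide. Take `κ = i/h` for both phases. The `g₂`-transport of `a₂` along `φ₁`
differs from its vanishing `g₁`-transport by the `s`-terms of the claim, and the remaining
`h⁻¹`-term, the eikonal defect `|∇φ₁|²_{g₂} - 1 = s(∇φ₁, ∇φ₁)`, is cancelled by the source
`a₂ m` in the transport equation of `a₃`.
-/

section MatrixRegularity

variable {E ι : Type*} [NormedAddCommGroup E] [NormedSpace ℝ E] [Fintype ι] [DecidableEq ι]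
  {g : E → Matrix ι ι ℝ}

theorem Differentiable.matrix_det (hg : ∀ i j, Differentiable ℝ fun x => g x i j) :
    Differentiable ℝ fun x => (g x).det := by
  simp only [Matrix.det_apply, Units.smul_def, zsmul_eq_mul]
  fun_prop

theorem Differentiable.matrix_adjugate_apply (hg : ∀ i j, Differentiable ℝ fun x => g x i j)
    (i j : ι) : Differentiable ℝ fun x => (g x).adjugate i j := by
  simp only [Matrix.adjugate_apply]
  refine Differentiable.matrix_det fun p q => ?_
  by_cases hp : p = j
  · simp [hp, Matrix.updateRow_apply]
  · simpa [hp, Matrix.updateRow_apply] using hg p q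

theorem Differentiable.matrix_inv_apply (hg : ∀ i j, Differentiable ℝ fun x => g x i j)
    (hdet : ∀ x, (g x).det ≠ 0) (i j : ι) : Differentiable ℝ fun x => (g x)⁻¹ i j := by
  simp only [Matrix.inv_def, Ring.inverse_eq_inv', Matrix.smul_apply, smul_eq_mul]
  exact ((Differentiable.matrix_det hg).inv hdet).mul (.matrix_adjugate_apply hg i j)

end MatrixRegularity

section PartialDerivatives

variable {n : ℕ} {x : Fin n → ℝ} {j : Fin n}

theorem pdC_const_mul_add {u v : (Fin n → ℝ) → ℂ} (c : ℂ) (hu : DifferentiableAt ℝ u x)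
    (hv : DifferentiableAt ℝ v x) :
    pdC n j (fun y => c * u y + v y) x = c * pdC n j u x + pdC n j v x := by
  simp [pdC, fderiv_fun_add (hu.const_mul c) hv, fderiv_const_mul hu]

theorem pdC_mul {u v : (Fin n → ℝ) → ℂ} (hu : DifferentiableAt ℝ u x)
    (hv : DifferentiableAt ℝ v x) :
    pdC n j (fun y => u y * v y) x = pdC n j u x * v x + u x * pdC n j v x := by
  simp only [pdC, fderiv_fun_mul hu hv]
  simp [smul_eq_mul]
  ring

theorem pdC_ofReal {φ : (Fin n → ℝ) → ℝ} (hφ : DifferentiableAt ℝ φ x) :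
    pdC n j (fun y => (φ y : ℂ)) x = pdR n j φ x := by
  have : HasFDerivAt (fun y => (φ y : ℂ)) (ofRealCLM.comp (fderiv ℝ φ x)) x :=
    ofRealCLM.hasFDerivAt.comp x hφ.hasFDerivAt
  simp [pdC, pdR, this.fderiv]

theorem pdC_cexp {φ : (Fin n → ℝ) → ℝ} (hφ : DifferentiableAt ℝ φ x) (κ c : ℂ) :
    pdC n j (fun y => cexp (κ * φ y + c)) x = κ * pdR n j φ x * cexp (κ * φ x + c) := by
  have hφ' : HasFDerivAt (fun y => (φ y : ℂ)) (ofRealCLM.comp (fderiv ℝ φ x)) x :=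
    ofRealCLM.hasFDerivAt.comp x hφ.hasFDerivAt
  simp [pdC, pdR, ((hφ'.const_mul κ).add_const c).cexp.fderiv]
  ring

theorem pdC_mul_cexp {u : (Fin n → ℝ) → ℂ} {φ : (Fin n → ℝ) → ℝ} (hu : DifferentiableAt ℝ u x)
    (hφ : DifferentiableAt ℝ φ x) (κ c : ℂ) :
    pdC n j (fun y => u y * cexp (κ * φ y + c)) x
      = (pdC n j u x + κ * pdR n j φ x * u x) * cexp (κ * φ x + c) := by
  have he : DifferentiableAt ℝ (fun y => cexp (κ * φ y + c)) x := by fun_prop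
  rw [pdC_mul hu he, pdC_cexp hφ]
  ring

theorem differentiable_pdC {u : (Fin n → ℝ) → ℂ} (hu : ContDiff ℝ 2 u) (j : Fin n) :
    Differentiable ℝ (pdC n j u) :=
  ((hu.fderiv_right (by norm_num)).clm_apply contDiff_const).differentiable one_ne_zero

theorem differentiable_pdR {φ : (Fin n → ℝ) → ℝ} (hφ : ContDiff ℝ 2 φ) (j : Fin n) :
    Differentiable ℝ (pdR n j φ) :=
  ((hφ.fderiv_right (by norm_num)).clm_apply contDiff_const).differentiable one_ne_zero

end PartialDerivatives

section Laplacian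

variable {n : ℕ} {g : (Fin n → ℝ) → Matrix (Fin n) (Fin n) ℝ}

def fluxC (g : (Fin n → ℝ) → Matrix (Fin n) (Fin n) ℝ) (u : (Fin n → ℝ) → ℂ) (j : Fin n)
    (y : Fin n → ℝ) : ℂ :=
  (Real.sqrt (g y).det : ℂ) * ∑ k, ((g y)⁻¹ j k : ℂ) * pdC n k u y

def fluxR (g : (Fin n → ℝ) → Matrix (Fin n) (Fin n) ℝ) (φ : (Fin n → ℝ) → ℝ) (j : Fin n)
    (y : Fin n → ℝ) : ℝ :=
  Real.sqrt (g y).det * ∑ k, (g y)⁻¹ j k * pdR n k φ y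

theorem laplC_eq_sum_pdC_fluxC (g : (Fin n → ℝ) → Matrix (Fin n) (Fin n) ℝ)
    (u : (Fin n → ℝ) → ℂ) (x : Fin n → ℝ) :
    laplC n g u x = (Real.sqrt (g x).det : ℂ)⁻¹ * ∑ j, pdC n j (fluxC g u j) x :=
  rfl

theorem laplR_eq_sum_pdR_fluxR (g : (Fin n → ℝ) → Matrix (Fin n) (Fin n) ℝ)
    (φ : (Fin n → ℝ) → ℝ) (x : Fin n → ℝ) :
    laplR n g φ x = (Real.sqrt (g x).det)⁻¹ * ∑ j, pdR n j (fluxR g φ j) x :=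
  rfl

theorem differentiable_fluxC (hg : ∀ i j, Differentiable ℝ fun x => g x i j)
    (hdet : ∀ x, (g x).det ≠ 0) {u : (Fin n → ℝ) → ℂ} (hu : ContDiff ℝ 2 u) (j : Fin n) :
    Differentiable ℝ (fluxC g u j) := by
  have hsqrt : Differentiable ℝ fun y => (Real.sqrt (g y).det : ℂ) :=
    ofRealCLM.differentiable.comp ((Differentiable.matrix_det hg).sqrt hdet)
  have hinv : ∀ k, Differentiable ℝ fun y => ((g y)⁻¹ j k : ℂ) := fun k =>
    ofRealCLM.differentiable.comp (Differentiable.matrix_inv_apply hg hdet j k)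
  exact hsqrt.fun_mul <| .fun_sum fun k _ => (hinv k).fun_mul (differentiable_pdC hu k)

theorem differentiable_fluxR (hg : ∀ i j, Differentiable ℝ fun x => g x i j)
    (hdet : ∀ x, (g x).det ≠ 0) {φ : (Fin n → ℝ) → ℝ} (hφ : ContDiff ℝ 2 φ) (j : Fin n) :
    Differentiable ℝ (fluxR g φ j) :=
  ((Differentiable.matrix_det hg).sqrt hdet).fun_mul <| .fun_sum fun k _ =>
    (Differentiable.matrix_inv_apply hg hdet j k).fun_mul (differentiable_pdR hφ k)

theorem fluxC_const_mul_add {u v : (Fin n → ℝ) → ℂ} (hu : Differentiable ℝ u)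
    (hv : Differentiable ℝ v) (c : ℂ) (j : Fin n) (y : Fin n → ℝ) :
    fluxC g (fun y => c * u y + v y) j y = c * fluxC g u j y + fluxC g v j y := by
  simp only [fluxC, pdC_const_mul_add c (hu y) (hv y), mul_add, Finset.sum_add_distrib,
    Finset.mul_sum]
  congr 1
  exact Finset.sum_congr rfl fun k _ => by ring

theorem laplC_const_mul_add (hg : ∀ i j, Differentiable ℝ fun x => g x i j)
    (hdet : ∀ x, (g x).det ≠ 0) {u v : (Fin n → ℝ) → ℂ} (hu : ContDiff ℝ 2 u)
    (hv : ContDiff ℝ 2 v) (c : ℂ) (x : Fin n → ℝ) :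
    laplC n g (fun y => c * u y + v y) x = c * laplC n g u x + laplC n g v x := by
  have hflux : ∀ j, fluxC g (fun y => c * u y + v y) j
      = fun y => c * fluxC g u j y + fluxC g v j y := fun j =>
    funext (fluxC_const_mul_add (hu.differentiable two_ne_zero) (hv.differentiable two_ne_zero) c j)
  simp only [laplC_eq_sum_pdC_fluxC, hflux, pdC_const_mul_add c
    (differentiable_fluxC hg hdet hu _ x) (differentiable_fluxC hg hdet hv _ x),
    Finset.sum_add_distrib, ← Finset.mul_sum]
  ring

end Laplacian

section Conjugation

variable {n : ℕ} {g : (Fin n → ℝ) → Matrix (Fin n) (Fin n) ℝ}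

theorem sum_fluxR_mul (hsymm : ∀ x, (g x).IsSymm) (φ : (Fin n → ℝ) → ℝ) (v : Fin n → ℂ)
    (x : Fin n → ℝ) :
    ∑ j, (fluxR g φ j x : ℂ) * v j
      = Real.sqrt (g x).det * ∑ j, ∑ k, (((g x)⁻¹ j k * pdR n j φ x : ℝ) : ℂ) * v k := by
  have hinv : ∀ j k, (g x)⁻¹ k j = (g x)⁻¹ j k := fun j k => by
    simpa [(hsymm x).eq] using congrArg (· j k) (Matrix.transpose_nonsing_inv (g x))
  simp only [fluxR, Complex.ofReal_mul, Complex.ofReal_sum, Finset.mul_sum, Finset.sum_mul]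
  rw [Finset.sum_comm]
  exact Finset.sum_congr rfl fun j _ => Finset.sum_congr rfl fun k _ => by rw [hinv]; ring

theorem sum_fluxC_mul (u : (Fin n → ℝ) → ℂ) (w : Fin n → ℝ) (x : Fin n → ℝ) :
    ∑ j, fluxC g u j x * w j
      = Real.sqrt (g x).det * ∑ j, ∑ k, (((g x)⁻¹ j k * w j : ℝ) : ℂ) * pdC n k u x := by
  simp only [fluxC, Finset.mul_sum, Finset.sum_mul]
  exact Finset.sum_congr rfl fun j _ => Finset.sum_congr rfl fun k _ => by push_cast; ring

theorem fluxC_mul_cexp {u : (Fin n → ℝ) → ℂ} {φ : (Fin n → ℝ) → ℝ} (hu : Differentiable ℝ u)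
    (hφ : Differentiable ℝ φ) (κ c : ℂ) (j : Fin n) (y : Fin n → ℝ) :
    fluxC g (fun y => u y * cexp (κ * φ y + c)) j y
      = (κ * (fluxR g φ j y * u y) + fluxC g u j y) * cexp (κ * φ y + c) := by
  simp only [fluxC, fluxR, pdC_mul_cexp (hu y) (hφ y), Finset.mul_sum, Finset.sum_mul,
    Complex.ofReal_mul, Complex.ofReal_sum, ← Finset.sum_add_distrib]
  exact Finset.sum_congr rfl fun k _ => by ring

theorem pdC_fluxC_mul_cexp (hg : ∀ i j, Differentiable ℝ fun x => g x i j)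
    (hdet : ∀ x, (g x).det ≠ 0) {u : (Fin n → ℝ) → ℂ} {φ : (Fin n → ℝ) → ℝ}
    (hu : ContDiff ℝ 2 u) (hφ : ContDiff ℝ 2 φ) (κ c : ℂ) (j : Fin n) (x : Fin n → ℝ) :
    pdC n j (fluxC g (fun y => u y * cexp (κ * φ y + c)) j) x
      = (κ * (pdR n j (fluxR g φ j) x * u x + fluxR g φ j x * pdC n j u x)
          + pdC n j (fluxC g u j) x
          + κ * pdR n j φ x * (κ * (fluxR g φ j x * u x) + fluxC g u j x))
        * cexp (κ * φ x + c) := by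
  have hu₁ : Differentiable ℝ u := hu.differentiable two_ne_zero
  have hφ₁ : Differentiable ℝ φ := hφ.differentiable two_ne_zero
  have hR := differentiable_fluxR hg hdet hφ j
  have hC := differentiable_fluxC hg hdet hu j
  have hR' : Differentiable ℝ fun y => (fluxR g φ j y : ℂ) := ofRealCLM.differentiable.comp hR
  have hRu : Differentiable ℝ fun y => (fluxR g φ j y : ℂ) * u y := hR'.mul hu₁
  have hF : DifferentiableAt ℝ (fun y => κ * (fluxR g φ j y * u y) + fluxC g u j y) x :=
    (hRu.const_mul κ).add hC x
  rw [funext (fluxC_mul_cexp hu₁ hφ₁ κ c j), pdC_mul_cexp hF (hφ₁ x),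
    pdC_const_mul_add κ (hRu x) (hC x), pdC_mul (hR' x) (hu₁ x), pdC_ofReal (hR x)]

theorem laplC_mul_cexp (hsymm : ∀ x, (g x).IsSymm)
    (hg : ∀ i j, Differentiable ℝ fun x => g x i j) (hdet : ∀ x, 0 < (g x).det)
    {u : (Fin n → ℝ) → ℂ} {φ : (Fin n → ℝ) → ℝ} (hu : ContDiff ℝ 2 u) (hφ : ContDiff ℝ 2 φ)
    (κ c : ℂ) (x : Fin n → ℝ) :
    laplC n g (fun y => u y * cexp (κ * φ y + c)) x
      = cexp (κ * φ x + c) *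
          (laplC n g u x
            + κ * (2 * ∑ j, ∑ k, (((g x)⁻¹ j k * pdR n j φ x : ℝ) : ℂ) * pdC n k u x
                + laplR n g φ x * u x)
            + κ ^ 2 * gradNormSq n g φ x * u x) := by
  have hsum : ∑ j, pdC n j (fluxC g (fun y => u y * cexp (κ * φ y + c)) j) x
      = cexp (κ * φ x + c) *
          (∑ j, pdC n j (fluxC g u j) x
            + κ * ((∑ j, (pdR n j (fluxR g φ j) x : ℂ)) * u x
              + ∑ j, (fluxR g φ j x : ℂ) * pdC n j u x
              + ∑ j, fluxC g u j x * pdR n j φ x)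
            + κ ^ 2 * (∑ j, (fluxR g φ j x : ℂ) * pdR n j φ x) * u x) := by
    simp only [pdC_fluxC_mul_cexp hg (fun x => (hdet x).ne') hu hφ, mul_add, add_mul,
      Finset.mul_sum, Finset.sum_mul, ← Finset.sum_add_distrib]
    exact Finset.sum_congr rfl fun j _ => by ring
  have hsqrt : (Real.sqrt (g x).det : ℂ) ≠ 0 := by exact_mod_cast (Real.sqrt_pos.2 (hdet x)).ne'
  rw [laplC_eq_sum_pdC_fluxC, hsum, laplC_eq_sum_pdC_fluxC, laplR_eq_sum_pdR_fluxR,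
    sum_fluxR_mul hsymm, sum_fluxR_mul hsymm, sum_fluxC_mul]
  simp only [gradNormSq]
  push_cast
  field_simp
  ring

end Conjugation

section TimeDerivatives

theorem deriv_fun_const_mul_add {f g : ℝ → ℂ} (hf : Differentiable ℝ f) (hg : Differentiable ℝ g)
    (c : ℂ) : deriv (fun s => c * f s + g s) = fun s => c * deriv f s + deriv g s :=
  funext fun s => by rw [deriv_fun_add ((hf s).const_mul c) (hg s), deriv_const_mul c (hf s)]

theorem deriv_mul_cexp {f : ℝ → ℂ} (hf : Differentiable ℝ f) (μ c : ℂ) :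
    deriv (fun s => f s * cexp (μ * s + c))
      = fun s => (μ * f s + deriv f s) * cexp (μ * s + c) := by
  funext s
  have he : HasDerivAt (fun s : ℝ => cexp (μ * s + c)) (cexp (μ * s + c) * μ) s := by
    simpa using ((hasDerivAt_id (s : ℂ)).const_mul μ |>.add_const c).cexp.comp_ofReal
  rw [deriv_fun_mul (hf s) he.differentiableAt, he.deriv]
  ring

theorem deriv_deriv_mul_cexp {f : ℝ → ℂ} (hf : ContDiff ℝ 2 f) (μ c : ℂ) (t : ℝ) :
    deriv (deriv fun s => f s * cexp (μ * s + c)) t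
      = (deriv (deriv f) t + 2 * μ * deriv f t + μ ^ 2 * f t) * cexp (μ * t + c) := by
  have hf₁ : Differentiable ℝ f := hf.differentiable two_ne_zero
  have hf₂ : Differentiable ℝ (deriv f) := hf.differentiable_deriv_two
  rw [deriv_mul_cexp hf₁, deriv_mul_cexp ((hf₁.const_mul μ).fun_add hf₂),
    deriv_fun_const_mul_add hf₁ hf₂]
  ring

end TimeDerivatives

section WaveOperator

variable {n : ℕ} {g : (Fin n → ℝ) → Matrix (Fin n) (Fin n) ℝ}

theorem dt2_eq_deriv_deriv (a : ℝ × (Fin n → ℝ) → ℂ) (t : ℝ) (x : Fin n → ℝ) :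
    dt2 n a t x = deriv (deriv fun s => a (s, x)) t :=
  rfl

theorem contDiff_cexp_mul_phase {k : WithTop ℕ∞} {φ : (Fin n → ℝ) → ℝ} (hφ : ContDiff ℝ k φ)
    (κ : ℂ) : ContDiff ℝ k fun p : ℝ × (Fin n → ℝ) => cexp (κ * ((φ p.2 : ℂ) - p.1)) := by
  have hx : ContDiff ℝ k fun p : ℝ × (Fin n → ℝ) => (φ p.2 : ℂ) :=
    ofRealCLM.contDiff.comp (hφ.comp contDiff_snd)
  have ht : ContDiff ℝ k fun p : ℝ × (Fin n → ℝ) => (p.1 : ℂ) :=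
    ofRealCLM.contDiff.comp contDiff_fst
  fun_prop

theorem waveOp_const_mul_add (hg : ∀ i j, Differentiable ℝ fun x => g x i j)
    (hdet : ∀ x, (g x).det ≠ 0) {u v : ℝ × (Fin n → ℝ) → ℂ} (hu : ContDiff ℝ 2 u)
    (hv : ContDiff ℝ 2 v) (c : ℂ) (t : ℝ) (x : Fin n → ℝ) :
    waveOp n g (fun p => c * u p + v p) t x = c * waveOp n g u t x + waveOp n g v t x := by
  have hu_t : ContDiff ℝ 2 fun s => u (s, x) := hu.comp (contDiff_prodMk_left x)
  have hv_t : ContDiff ℝ 2 fun s => v (s, x) := hv.comp (contDiff_prodMk_left x)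
  have hu_x : ContDiff ℝ 2 fun y => u (t, y) := hu.comp (contDiff_prodMk_right t)
  have hv_x : ContDiff ℝ 2 fun y => v (t, y) := hv.comp (contDiff_prodMk_right t)
  simp only [waveOp, dt2_eq_deriv_deriv]
  rw [deriv_fun_const_mul_add (hu_t.differentiable two_ne_zero) (hv_t.differentiable two_ne_zero),
    deriv_fun_const_mul_add hu_t.differentiable_deriv_two hv_t.differentiable_deriv_two,
    laplC_const_mul_add hg hdet hu_x hv_x]
  ring

theorem waveOp_mul_cexp (hsymm : ∀ x, (g x).IsSymm)
    (hg : ∀ i j, Differentiable ℝ fun x => g x i j) (hdet : ∀ x, 0 < (g x).det)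
    {a : ℝ × (Fin n → ℝ) → ℂ} {φ : (Fin n → ℝ) → ℝ} (ha : ContDiff ℝ 2 a) (hφ : ContDiff ℝ 2 φ)
    (κ : ℂ) (t : ℝ) (x : Fin n → ℝ) :
    waveOp n g (fun p => a p * cexp (κ * ((φ p.2 : ℂ) - p.1))) t x
      = cexp (κ * ((φ x : ℂ) - t)) *
          (waveOp n g a t x - 2 * κ * transport n g φ a t x
            + κ ^ 2 * (1 - gradNormSq n g φ x) * a (t, x)) := by
  have ha_t : ContDiff ℝ 2 fun s => a (s, x) := ha.comp (contDiff_prodMk_left x)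
  have ha_x : ContDiff ℝ 2 fun y => a (t, y) := ha.comp (contDiff_prodMk_right t)
  have htime : (fun s : ℝ => a (s, x) * cexp (κ * ((φ x : ℂ) - s)))
      = fun s : ℝ => a (s, x) * cexp (-κ * s + κ * φ x) :=
    funext fun s => by ring_nf
  have hspace : (fun y => a (t, y) * cexp (κ * ((φ y : ℂ) - t)))
      = fun y => a (t, y) * cexp (κ * φ y + -κ * t) :=
    funext fun y => by ring_nf
  have hexp : cexp (κ * ((φ x : ℂ) - t)) = cexp (κ * φ x + -κ * t) := by ring_nf
  simp only [waveOp, dt2_eq_deriv_deriv, transport, gradInnerC, dt1]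
  rw [htime, hspace, deriv_deriv_mul_cexp ha_t, laplC_mul_cexp hsymm hg hdet ha_x hφ,
    add_comm (-κ * (t : ℂ)), hexp]
  ring

end WaveOperator

section MetricPerturbation

variable {n : ℕ} (g₁ g₂ : (Fin n → ℝ) → Matrix (Fin n) (Fin n) ℝ) (φ : (Fin n → ℝ) → ℝ)

theorem gradNormSq_eq_add (x : Fin n → ℝ) :
    gradNormSq n g₂ φ x = gradNormSq n g₁ φ x
      + ∑ j, ∑ k, ((g₂ x)⁻¹ j k - (g₁ x)⁻¹ j k) * pdR n j φ x * pdR n k φ x := by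
  simp only [gradNormSq, ← Finset.sum_add_distrib]
  exact Finset.sum_congr rfl fun j _ => Finset.sum_congr rfl fun k _ => by ring

theorem transport_eq_add (a : ℝ × (Fin n → ℝ) → ℂ) (t : ℝ) (x : Fin n → ℝ) :
    transport n g₂ φ a t x = transport n g₁ φ a t x
      + ∑ j, ∑ k, ((((g₂ x)⁻¹ j k - (g₁ x)⁻¹ j k) * pdR n j φ x : ℝ) : ℂ)
          * pdC n k (fun y => a (t, y)) x
      + 1 / 2 * ((laplR n g₂ φ x : ℂ) - laplR n g₁ φ x) * a (t, x) := by
  have hgrad : gradInnerC n g₂ φ a t x = gradInnerC n g₁ φ a t x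
      + ∑ j, ∑ k, ((((g₂ x)⁻¹ j k - (g₁ x)⁻¹ j k) * pdR n j φ x : ℝ) : ℂ)
          * pdC n k (fun y => a (t, y)) x := by
    simp only [gradInnerC, ← Finset.sum_add_distrib]
    exact Finset.sum_congr rfl fun j _ => Finset.sum_congr rfl fun k _ => by push_cast; ring
  simp only [transport, hgrad]
  ring

end MetricPerturbation

theorem wkb_two_phase_expansion_general (n : ℕ)
    (g₁ g₂ : (Fin n → ℝ) → Matrix (Fin n) (Fin n) ℝ)
    (hg₂_symm : ∀ x, (g₂ x).IsSymm) (hg₂_pos : ∀ x, (g₂ x).PosDef)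
    (hg₂_smooth : ∀ j k, ContDiff ℝ 1 (fun x => g₂ x j k))
    (φ₁ φ₂ : (Fin n → ℝ) → ℝ) (hφ₁ : ContDiff ℝ 2 φ₁) (hφ₂ : ContDiff ℝ 2 φ₂)
    (heik₁ : ∀ x, gradNormSq n g₁ φ₁ x = 1)
    (heik₂ : ∀ x, gradNormSq n g₂ φ₂ x = 1)
    (s : (Fin n → ℝ) → Fin n → Fin n → ℝ)
    (hs : ∀ x j k, s x j k = (g₂ x)⁻¹ j k - (g₁ x)⁻¹ j k)
    (h : ℝ) (hh : 0 < h)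
    (m : (Fin n → ℝ) → ℂ)
    (hm : ∀ x, m x = -(Complex.I / 2) * Complex.exp (Complex.I * ((φ₁ x : ℂ) - (φ₂ x : ℂ)) / (h : ℂ)) *
      ∑ j, ∑ k, ((s x j k : ℝ) : ℂ) * ((pdR n j φ₁ x : ℝ) : ℂ) * ((pdR n k φ₁ x : ℝ) : ℂ))
    (a₂ a₃ : ℝ × (Fin n → ℝ) → ℂ) (ha₂ : ContDiff ℝ 2 a₂) (ha₃ : ContDiff ℝ 2 a₃)
    (htrans₂ : ∀ (t : ℝ) (x : Fin n → ℝ), transport n g₁ φ₁ a₂ t x = 0)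
    (htrans₃ : ∀ (t : ℝ) (x : Fin n → ℝ), transport n g₂ φ₂ a₃ t x = a₂ (t, x) * m x) :
    ∀ (t : ℝ) (x : Fin n → ℝ),
      waveOp n g₂ (fun p =>
          (h : ℂ) * a₂ p * Complex.exp (Complex.I * ((φ₁ p.2 : ℂ) - (p.1 : ℂ)) / (h : ℂ))
            + a₃ p * Complex.exp (Complex.I * ((φ₂ p.2 : ℂ) - (p.1 : ℂ)) / (h : ℂ))) t x
        = Complex.exp (Complex.I * ((φ₁ x : ℂ) - (t : ℂ)) / (h : ℂ)) *
            ((h : ℂ) * waveOp n g₂ a₂ t x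
              - 2 * Complex.I *
                  (∑ j, ∑ k, ((s x j k * pdR n j φ₁ x : ℝ) : ℂ) * pdC n k (fun y => a₂ (t, y)) x)
              - Complex.I * ((laplR n g₂ φ₁ x : ℝ) - (laplR n g₁ φ₁ x : ℝ) : ℂ) * a₂ (t, x))
          + Complex.exp (Complex.I * ((φ₂ x : ℂ) - (t : ℂ)) / (h : ℂ)) * waveOp n g₂ a₃ t x := by
  intro t x
  have hg : ∀ i j, Differentiable ℝ fun x => g₂ x i j :=
    fun i j => (hg₂_smooth i j).differentiable one_ne_zero
  have hdet : ∀ x, 0 < (g₂ x).det := fun x => (hg₂_pos x).det_pos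
  simp only [hs, mul_div_right_comm I] at hm ⊢
  rw [show (fun p : ℝ × (Fin n → ℝ) => (h : ℂ) * a₂ p * cexp (I / h * ((φ₁ p.2 : ℂ) - p.1))
        + a₃ p * cexp (I / h * ((φ₂ p.2 : ℂ) - p.1)))
      = fun p => (h : ℂ) * (a₂ p * cexp (I / h * ((φ₁ p.2 : ℂ) - p.1)))
        + a₃ p * cexp (I / h * ((φ₂ p.2 : ℂ) - p.1)) from funext fun p => by ring,
    waveOp_const_mul_add hg (fun x => (hdet x).ne') (ha₂.mul (contDiff_cexp_mul_phase hφ₁ _))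
      (ha₃.mul (contDiff_cexp_mul_phase hφ₂ _)),
    waveOp_mul_cexp hg₂_symm hg hdet ha₂ hφ₁, waveOp_mul_cexp hg₂_symm hg hdet ha₃ hφ₂,
    transport_eq_add g₁, htrans₂, htrans₃, hm, heik₂, gradNormSq_eq_add g₁, heik₁]
  have hexp : cexp (I / h * ((φ₂ x : ℂ) - t)) * cexp (I / h * ((φ₁ x : ℂ) - φ₂ x))
      = cexp (I / h * ((φ₁ x : ℂ) - t)) := by
    rw [← Complex.exp_add]; ring_nf
  have hinv : (h : ℂ) * (h : ℂ)⁻¹ = 1 := mul_inv_cancel₀ (by exact_mod_cast hh.ne')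
  push_cast
  set S : ℂ := ∑ j, ∑ k, (((g₂ x)⁻¹ j k : ℂ) - (g₁ x)⁻¹ j k) * pdR n j φ₁ x
    * pdC n k (fun y => a₂ (t, y)) x
  set Q : ℂ := ∑ j, ∑ k, (((g₂ x)⁻¹ j k : ℂ) - (g₁ x)⁻¹ j k) * pdR n j φ₁ x * pdR n k φ₁ x
  set D : ℂ := (laplR n g₂ φ₁ x : ℂ) - laplR n g₁ φ₁ x
  linear_combination (-I * cexp (I / h * ((φ₁ x : ℂ) - t)) * (2 * S + D * a₂ (t, x)
    + I / h * a₂ (t, x) * Q)) * hinv + (I / h * I * a₂ (t, x) * Q) * hexp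

/-- two-phase WKB expansion, equations (3.43)–(3.45). -/
theorem wkb_two_phase_expansion (n : ℕ) (hn : 1 ≤ n)
    (g₁ g₂ : (Fin n → ℝ) → Matrix (Fin n) (Fin n) ℝ)
    (hg₁_symm : ∀ x, (g₁ x).IsSymm) (hg₁_pos : ∀ x, (g₁ x).PosDef)
    (hg₂_symm : ∀ x, (g₂ x).IsSymm) (hg₂_pos : ∀ x, (g₂ x).PosDef)
    (hg₁_smooth : ∀ j k, ContDiff ℝ 1 (fun x => g₁ x j k))
    (hg₂_smooth : ∀ j k, ContDiff ℝ 1 (fun x => g₂ x j k))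
    (φ₁ φ₂ : (Fin n → ℝ) → ℝ) (hφ₁ : ContDiff ℝ 2 φ₁) (hφ₂ : ContDiff ℝ 2 φ₂)
    (heik₁ : ∀ x, gradNormSq n g₁ φ₁ x = 1)
    (heik₂ : ∀ x, gradNormSq n g₂ φ₂ x = 1)
    (s : (Fin n → ℝ) → Fin n → Fin n → ℝ)
    (hs : ∀ x j k, s x j k = (g₂ x)⁻¹ j k - (g₁ x)⁻¹ j k)
    (h : ℝ) (hh : 0 < h)
    (m : (Fin n → ℝ) → ℂ)
    (hm : ∀ x, m x = -(Complex.I / 2) * Complex.exp (Complex.I * ((φ₁ x : ℂ) - (φ₂ x : ℂ)) / (h : ℂ)) *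
      ∑ j, ∑ k, ((s x j k : ℝ) : ℂ) * ((pdR n j φ₁ x : ℝ) : ℂ) * ((pdR n k φ₁ x : ℝ) : ℂ))
    (a₂ a₃ : ℝ × (Fin n → ℝ) → ℂ) (ha₂ : ContDiff ℝ 2 a₂) (ha₃ : ContDiff ℝ 2 a₃)
    (htrans₂ : ∀ (t : ℝ) (x : Fin n → ℝ), transport n g₁ φ₁ a₂ t x = 0)
    (htrans₃ : ∀ (t : ℝ) (x : Fin n → ℝ), transport n g₂ φ₂ a₃ t x = a₂ (t, x) * m x) :
    ∀ (t : ℝ) (x : Fin n → ℝ),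
      waveOp n g₂ (fun p =>
          (h : ℂ) * a₂ p * Complex.exp (Complex.I * ((φ₁ p.2 : ℂ) - (p.1 : ℂ)) / (h : ℂ))
            + a₃ p * Complex.exp (Complex.I * ((φ₂ p.2 : ℂ) - (p.1 : ℂ)) / (h : ℂ))) t x
        = Complex.exp (Complex.I * ((φ₁ x : ℂ) - (t : ℂ)) / (h : ℂ)) *
            ((h : ℂ) * waveOp n g₂ a₂ t x
              - 2 * Complex.I *
                  (∑ j, ∑ k, ((s x j k * pdR n j φ₁ x : ℝ) : ℂ) * pdC n k (fun y => a₂ (t, y)) x)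
              - Complex.I * ((laplR n g₂ φ₁ x : ℝ) - (laplR n g₁ φ₁ x : ℝ) : ℂ) * a₂ (t, x))
          + Complex.exp (Complex.I * ((φ₂ x : ℂ) - (t : ℂ)) / (h : ℂ)) * waveOp n g₂ a₃ t x :=
  wkb_two_phase_expansion_general n g₁ g₂ hg₂_symm hg₂_pos hg₂_smooth φ₁ φ₂ hφ₁ hφ₂ heik₁ heik₂ s hs
    h hh m hm a₂ a₃ ha₂ ha₃ htrans₂ htrans₃
end
end

section
/- Let n ≥ 1, m ≥ 1, R > 0 and M ≥ 0, and let Ω ⊆ { x ∈ ℝⁿ : |x| < R } be an open set. Let A : ℝⁿ → (real m×m matrices) be continuous with operator norm ‖A(x)‖ ≤ M for all x, let F : ℝⁿ → ℝ^m be continuous with compact support, and let v : ℝⁿ → ℝ^m be of class C¹ with v(x', x_n) = 0 whenever x_n ≤ −R, satisfying the ordinary differential equation in the last variable ∂_{x_n} v(x) = A(x) v(x) + F(x) for all x ∈ ℝⁿ. Then ( ∫_Ω |v(x)|² dx )^{1/2} ≤ 2R e^{2MR} ( ∫_{ℝⁿ} |F(x)|² dx )^{1/2}. -/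
/-!
Along each coordinate line, `g t = v (update x en t)` solves `g' = A g + f` with
`f t = F (update x en t)` and `g (-R) = 0`. Subtracting the primitive of `f` leaves an ODE with
constant forcing, and Grönwall gives `‖v x‖ ≤ e^{2MR} ∫_{-R}^{R} ‖f‖`. Cauchy–Schwarz squares this
into `2R e^{4MR} ∫_{-R}^{R} ‖f‖²`; integrating over the slab `|x_en| ≤ R ⊇ Ω` and using Tonelli
in the variable `x_en` costs one more factor `2R`.
-/

noncomputable section

open MeasureTheory Set Real Function

theorem sq_integral_le_measureReal_univ_mul_integral_sq {α : Type*} [MeasurableSpace α]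
    {μ : Measure α} [IsFiniteMeasure μ] {f : α → ℝ} (hf : Integrable f μ)
    (hf2 : Integrable (fun x => f x ^ 2) μ) :
    (∫ x, f x ∂μ) ^ 2 ≤ μ.real univ * ∫ x, f x ^ 2 ∂μ := by
  rcases eq_zero_or_neZero μ with rfl | _
  · simp
  have hjensen : (⨍ x, f x ∂μ) ^ 2 ≤ ⨍ x, f x ^ 2 ∂μ :=
    (even_two.convexOn_pow (𝕜 := ℝ)).map_average_le (continuous_pow 2).continuousOn
      isClosed_univ (.of_forall fun _ => mem_univ _) hf hf2
  have hμ : 0 < μ.real univ := measureReal_univ_pos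
  rw [average_eq, average_eq, smul_eq_mul, smul_eq_mul, mul_pow, inv_pow] at hjensen
  rwa [inv_mul_le_iff₀ (by positivity), ← mul_assoc, sq (μ.real _), mul_assoc _ _ (_⁻¹),
    mul_inv_cancel₀ hμ.ne', mul_one] at hjensen

theorem ofReal_sq_intervalIntegral_le {g : ℝ → ℝ} (hg : Continuous g) {a b : ℝ} (hab : a ≤ b) :
    ENNReal.ofReal ((∫ t in a..b, g t) ^ 2)
      ≤ ENNReal.ofReal (b - a) * ∫⁻ t, ENNReal.ofReal (g t ^ 2) := by
  have hg2 : Continuous fun t => g t ^ 2 := by fun_prop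
  have hcs := sq_integral_le_measureReal_univ_mul_integral_sq (μ := volume.restrict (Ioc a b))
    hg.integrableOn_Ioc hg2.integrableOn_Ioc
  rw [intervalIntegral.integral_of_le hab]
  calc ENNReal.ofReal ((∫ t in Ioc a b, g t) ^ 2)
      ≤ ENNReal.ofReal (b - a) * ENNReal.ofReal (∫ t in Ioc a b, g t ^ 2) := by
        rw [← ENNReal.ofReal_mul (by linarith)]
        apply ENNReal.ofReal_le_ofReal
        simpa [Real.volume_real_Ioc_of_le hab] using hcs
    _ ≤ ENNReal.ofReal (b - a) * ∫⁻ t, ENNReal.ofReal (g t ^ 2) := by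
        gcongr
        rw [ofReal_integral_eq_lintegral_ofReal hg2.integrableOn_Ioc
          (.of_forall fun _ => sq_nonneg _)]
        exact setLIntegral_le_lintegral _ _

theorem setLIntegral_preimage_eval_lintegral_update {n : ℕ} {X : Fin (n + 1) → Type*}
    [∀ i, MeasurableSpace (X i)] (μ : ∀ i, Measure (X i)) [∀ i, SigmaFinite (μ i)]
    {f : (∀ i, X i) → ENNReal} (hf : Measurable f) (i : Fin (n + 1)) {s : Set (X i)}
    (hs : MeasurableSet s) :
    ∫⁻ x in (fun x => x i) ⁻¹' s, ∫⁻ t, f (update x i t) ∂μ i ∂Measure.pi μ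
      = μ i s * ∫⁻ x, f x ∂Measure.pi μ := by
  have he := (measurePreserving_piFinSuccAbove μ i).symm
  set e := MeasurableEquiv.piFinSuccAbove X i
  have hfe : Measurable fun p => f (e.symm p) := hf.comp e.symm.measurable
  have hslice : ∀ p : X i × ∀ j, X (i.succAbove j),
      ((fun x => x i) ⁻¹' s).indicator (fun x => ∫⁻ t, f (update x i t) ∂μ i) (e.symm p)
        = s.indicator 1 p.1 * ∫⁻ t, f (e.symm (t, p.2)) ∂μ i := by
    rintro ⟨a, y⟩
    have hsymm : ∀ p, e.symm p = Fin.insertNth i p.1 p.2 := fun _ => rfl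
    simp only [hsymm]
    by_cases ha : a ∈ s <;> simp [ha]
  rw [← lintegral_indicator (measurable_pi_apply i hs),
    ← he.lintegral_comp_emb e.symm.measurableEmbedding,
    ← he.lintegral_comp_emb e.symm.measurableEmbedding]
  simp_rw [hslice]
  rw [lintegral_prod_mul (by fun_prop) hfe.lintegral_prod_left'.aemeasurable,
    lintegral_prod_symm _ hfe.aemeasurable, lintegral_indicator_one hs]

theorem norm_le_exp_mul_integral_norm_of_norm_deriv_sub_le {E : Type*} [NormedAddCommGroup E]
    [NormedSpace ℝ E] [CompleteSpace E] {g g' f : ℝ → E} {M a b t : ℝ} (hM : 0 ≤ M)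
    (hg : ∀ t, HasDerivAt g (g' t) t) (hf : Continuous f) (hga : g a = 0)
    (hbound : ∀ t, ‖g' t - f t‖ ≤ M * ‖g t‖) (ht : t ∈ Icc a b) :
    ‖g t‖ ≤ exp (M * (t - a)) * ∫ s in a..b, ‖f s‖ := by
  set Φ := ∫ s in a..b, ‖f s‖
  have hI : ∀ t ∈ Icc a b, ‖∫ s in a..t, f s‖ ≤ Φ := fun t ht =>
    (intervalIntegral.norm_integral_le_integral_norm ht.1).trans <|
      intervalIntegral.integral_mono_interval le_rfl ht.1 ht.2
        (.of_forall fun _ => norm_nonneg _) (hf.norm.intervalIntegrable _ _)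
  set h := fun t => g t - ∫ s in a..t, f s
  have hh : ∀ t, HasDerivAt h (g' t - f t) t := fun t =>
    (hg t).sub (hf.integral_hasStrictDerivAt a t).hasDerivAt
  have hg_le : ∀ t ∈ Icc a b, ‖g t‖ ≤ ‖h t‖ + Φ := fun t ht =>
    (norm_le_norm_sub_add (g t) _).trans (add_le_add_right (hI t ht) _)
  have hgronwall := norm_le_gronwallBound_of_norm_deriv_right_le (δ := 0) (K := M) (ε := M * Φ)
    (fun t _ => (hh t).continuousAt.continuousWithinAt) (fun t _ => (hh t).hasDerivWithinAt)
    (by simp [h, hga]) (fun t ht => (hbound t).trans <| by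
      nlinarith [hg_le t (Ico_subset_Icc_self ht)]) t ht
  have hbound_eq : gronwallBound 0 M (M * Φ) (t - a) = Φ * (exp (M * (t - a)) - 1) := by
    rcases eq_or_ne M 0 with rfl | hM0
    · simp [gronwallBound_K0]
    · rw [gronwallBound_of_K_ne_0 hM0]
      field_simp
      ring
  linarith [hg_le t ht]

section CoordinateLines

variable {ι E : Type*} [Fintype ι] [DecidableEq ι] [NormedAddCommGroup E] [NormedSpace ℝ E]
  [CompleteSpace E] {A : (ι → ℝ) → E →L[ℝ] E} {F v : (ι → ℝ) → E} {M R : ℝ} {i : ι}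

theorem norm_le_exp_mul_integral_norm_update (hM : 0 ≤ M) (hA_bd : ∀ x, ‖A x‖ ≤ M)
    (hF : Continuous F) (hv : Differentiable ℝ v) (hv_zero : ∀ x, x i ≤ -R → v x = 0)
    (hODE : ∀ x, fderiv ℝ v x (Pi.single i 1) = A x (v x) + F x) {x : ι → ℝ}
    (hx : x i ∈ Icc (-R) R) :
    ‖v x‖ ≤ exp (2 * M * R) * ∫ t in -R..R, ‖F (update x i t)‖ := by
  have hline := norm_le_exp_mul_integral_norm_of_norm_deriv_sub_le hM
    (g := fun t => v (update x i t)) (f := fun t => F (update x i t))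
    (fun t => hODE (update x i t) ▸ (hv _).hasFDerivAt.comp_hasDerivAt t (hasDerivAt_update x i t))
    (hF.comp (continuous_const.update i continuous_id)) (hv_zero _ (by simp))
    (fun t => by simpa only [add_sub_cancel_right] using (A _).le_of_opNorm_le (hA_bd _) _) hx
  simp only [update_eq_self] at hline
  refine hline.trans (mul_le_mul_of_nonneg_right (exp_le_exp.2 (by nlinarith [hx.2])) ?_)
  exact intervalIntegral.integral_nonneg (by linarith [hx.1, hx.2]) fun _ _ => norm_nonneg _

theorem ofReal_norm_sq_le_lintegral_update (hM : 0 ≤ M) (hA_bd : ∀ x, ‖A x‖ ≤ M)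
    (hF : Continuous F) (hv : Differentiable ℝ v) (hv_zero : ∀ x, x i ≤ -R → v x = 0)
    (hODE : ∀ x, fderiv ℝ v x (Pi.single i 1) = A x (v x) + F x) {x : ι → ℝ}
    (hx : x i ∈ Icc (-R) R) :
    ENNReal.ofReal (‖v x‖ ^ 2) ≤ ENNReal.ofReal (2 * R * exp (2 * M * R) ^ 2)
      * ∫⁻ t, ENNReal.ofReal (‖F (update x i t)‖ ^ 2) := by
  have hcs := ofReal_sq_intervalIntegral_le (g := fun t => ‖F (update x i t)‖)
    (by fun_prop) (a := -R) (b := R) (by linarith [hx.1, hx.2])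
  rw [sub_neg_eq_add, ← two_mul] at hcs
  calc ENNReal.ofReal (‖v x‖ ^ 2)
      ≤ ENNReal.ofReal ((exp (2 * M * R) * ∫ t in -R..R, ‖F (update x i t)‖) ^ 2) := by
        gcongr
        exact norm_le_exp_mul_integral_norm_update hM hA_bd hF hv hv_zero hODE hx
    _ ≤ _ := by
        rw [mul_pow, ENNReal.ofReal_mul (by positivity), mul_comm (2 * R),
          ENNReal.ofReal_mul (by positivity), mul_assoc (ENNReal.ofReal _)]
        gcongr

end CoordinateLines

theorem setLIntegral_slab_ofReal_norm_sq_le {n : ℕ} {E : Type*} [NormedAddCommGroup E]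
    [NormedSpace ℝ E] [CompleteSpace E] {A : (Fin (n + 1) → ℝ) → E →L[ℝ] E}
    {F v : (Fin (n + 1) → ℝ) → E} {M R : ℝ} {i : Fin (n + 1)} (hR : 0 ≤ R) (hM : 0 ≤ M)
    (hA_bd : ∀ x, ‖A x‖ ≤ M) (hF : Continuous F) (hF2 : Integrable fun x => ‖F x‖ ^ 2)
    (hv : Differentiable ℝ v) (hv_zero : ∀ x, x i ≤ -R → v x = 0)
    (hODE : ∀ x, fderiv ℝ v x (Pi.single i 1) = A x (v x) + F x) :
    ∫⁻ x in (fun x => x i) ⁻¹' Icc (-R) R, ENNReal.ofReal (‖v x‖ ^ 2)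
      ≤ ENNReal.ofReal ((2 * R * exp (2 * M * R)) ^ 2 * ∫ x, ‖F x‖ ^ 2) := by
  have hslab := setLIntegral_preimage_eval_lintegral_update (fun _ => volume)
    (f := fun x => ENNReal.ofReal (‖F x‖ ^ 2)) (hF.norm.pow 2).measurable.ennreal_ofReal i
    (measurableSet_Icc (a := -R) (b := R))
  rw [← volume_pi, Real.volume_Icc, ← ofReal_integral_eq_lintegral_ofReal hF2
    (.of_forall fun _ => sq_nonneg _)] at hslab
  calc ∫⁻ x in (fun x => x i) ⁻¹' Icc (-R) R, ENNReal.ofReal (‖v x‖ ^ 2)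
      ≤ ∫⁻ x in (fun x => x i) ⁻¹' Icc (-R) R, ENNReal.ofReal (2 * R * exp (2 * M * R) ^ 2)
          * ∫⁻ t, ENNReal.ofReal (‖F (update x i t)‖ ^ 2) :=
        setLIntegral_mono' (measurable_pi_apply i measurableSet_Icc) fun x hx =>
          ofReal_norm_sq_le_lintegral_update hM hA_bd hF hv hv_zero hODE hx
    _ = ENNReal.ofReal ((2 * R * exp (2 * M * R)) ^ 2 * ∫ x, ‖F x‖ ^ 2) := by
        rw [lintegral_const_mul' _ _ ENNReal.ofReal_ne_top, hslab,
          ← ENNReal.ofReal_mul (by linarith), ← ENNReal.ofReal_mul (by positivity)]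
        ring_nf

theorem gronwall_L2_bound_general (n m : ℕ) (R M : ℝ)
    (hR : 0 < R) (hM : 0 ≤ M)
    (Ω : Set (Fin n → ℝ))
    (hΩball : Ω ⊆ {x : Fin n → ℝ | ∑ i, x i ^ 2 < R ^ 2})
    (en : Fin n)
    (A : (Fin n → ℝ) → (EuclideanSpace ℝ (Fin m) →L[ℝ] EuclideanSpace ℝ (Fin m)))
    (hA_bd : ∀ x, ‖A x‖ ≤ M)
    (F : (Fin n → ℝ) → EuclideanSpace ℝ (Fin m))
    (hF_cont : Continuous F) (hF_supp : HasCompactSupport F)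
    (v : (Fin n → ℝ) → EuclideanSpace ℝ (Fin m)) (hv : ContDiff ℝ 1 v)
    (hv_zero : ∀ x : Fin n → ℝ, x en ≤ -R → v x = 0)
    (hODE : ∀ x : Fin n → ℝ, fderiv ℝ v x (Pi.single en 1) = A x (v x) + F x) :
    Real.sqrt (∫ x in Ω, ‖v x‖ ^ 2)
      ≤ 2 * R * Real.exp (2 * M * R) * Real.sqrt (∫ x : Fin n → ℝ, ‖F x‖ ^ 2) := by
  obtain ⟨n, rfl⟩ := Nat.exists_eq_add_one.2 en.pos
  set C := 2 * R * exp (2 * M * R)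
  have hΩ_slab : Ω ⊆ (fun x => x en) ⁻¹' Icc (-R) R := fun x hx =>
    abs_le.1 (abs_lt_of_sq_lt_sq ((Finset.single_le_sum (fun j _ => sq_nonneg (x j))
      (Finset.mem_univ en)).trans_lt (hΩball hx)) hR.le).le
  have hF2 : Integrable fun x => ‖F x‖ ^ 2 :=
    (hF_cont.memLp_of_hasCompactSupport hF_supp).integrable_norm_pow two_ne_zero
  have hlint : ∫⁻ x in Ω, ENNReal.ofReal (‖v x‖ ^ 2) ≤ ENNReal.ofReal (C ^ 2 * ∫ x, ‖F x‖ ^ 2) :=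
    (lintegral_mono_set hΩ_slab).trans <| setLIntegral_slab_ofReal_norm_sq_le hR.le hM hA_bd
      hF_cont hF2 (hv.differentiable one_ne_zero) hv_zero hODE
  have hint : ∫ x in Ω, ‖v x‖ ^ 2 ≤ C ^ 2 * ∫ x, ‖F x‖ ^ 2 := by
    rw [integral_eq_lintegral_of_nonneg_ae (.of_forall fun _ => sq_nonneg _)
      (hv.continuous.norm.pow 2).aestronglyMeasurable]
    exact ENNReal.toReal_le_of_le_ofReal (by positivity) hlint
  calc Real.sqrt (∫ x in Ω, ‖v x‖ ^ 2) ≤ Real.sqrt (C ^ 2 * ∫ x, ‖F x‖ ^ 2) := Real.sqrt_le_sqrt hint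
    _ = C * Real.sqrt (∫ x, ‖F x‖ ^ 2) := by
        rw [Real.sqrt_mul (sq_nonneg _), Real.sqrt_sq (by positivity)]

/-- Grönwall-type `L²` bound for a linear first-order ODE system in the
last variable, equations (4.29)–(4.34) of the proof of Lemma 4.4. -/
theorem gronwall_L2_bound (n m : ℕ) (hn : 1 ≤ n) (hm : 1 ≤ m) (R M : ℝ)
    (hR : 0 < R) (hM : 0 ≤ M)
    (Ω : Set (Fin n → ℝ)) (hΩop : IsOpen Ω)
    (hΩball : Ω ⊆ {x : Fin n → ℝ | ∑ i, x i ^ 2 < R ^ 2})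
    (en : Fin n) (hen : (en : ℕ) = n - 1)
    (A : (Fin n → ℝ) → (EuclideanSpace ℝ (Fin m) →L[ℝ] EuclideanSpace ℝ (Fin m)))
    (hA_cont : Continuous A) (hA_bd : ∀ x, ‖A x‖ ≤ M)
    (F : (Fin n → ℝ) → EuclideanSpace ℝ (Fin m))
    (hF_cont : Continuous F) (hF_supp : HasCompactSupport F)
    (v : (Fin n → ℝ) → EuclideanSpace ℝ (Fin m)) (hv : ContDiff ℝ 1 v)
    (hv_zero : ∀ x : Fin n → ℝ, x en ≤ -R → v x = 0)
    (hODE : ∀ x : Fin n → ℝ, fderiv ℝ v x (Pi.single en 1) = A x (v x) + F x) :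
    Real.sqrt (∫ x in Ω, ‖v x‖ ^ 2)
      ≤ 2 * R * Real.exp (2 * M * R) * Real.sqrt (∫ x : Fin n → ℝ, ‖F x‖ ^ 2) :=
  gronwall_L2_bound_general n m R M hR hM Ω hΩball en A hA_bd F hF_cont hF_supp v hv hv_zero hODE
end
end
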